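/- arXiv:1110.2136 — 6 statements merged into one kernel-verified Lean document; each statement's English description precedes it below -/
import Mathlib

section
/- Let h, h₁, h* be hypotheses in a concept class C with error function err and pseudo-metric dist satisfying dist(g,g') ≤ err(g) + err(g') for all g,g'. Suppose f : C → ℝ satisfies |f(h') - (err(h') - err(h))| ≤ ε·(dist(h,h') + μ) for all h' ∈ C, where 0 < ε < 1/5 and μ ≥ 0. If h₁ minimizes f over C and ν = err(h*) = inf over C of err, then err(h₁) ≤ (1 + O(ε))·ν + O(ε)·err(h) + O(ε·μ); concretely, err(h₁) ≤ ((1+3ε)ν + 2ε·err(h) + 2εμ)/(1-ε). -/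
/-- Single-step SRRA theorem: if `f` is an `(ε,μ)`-smooth relative regret
approximation with respect to `h` and `h₁` minimizes `f`, then the error of `h₁`
is at most `((1+3ε)ν + 2ε·err h + 2εμ)/(1-ε)`. -/
theorem srra_single_step {C : Type*} (err : C → ℝ) (dist : C → C → ℝ)
    (h h₁ hstar : C) (f : C → ℝ) (ε μ ν : ℝ)
    (hε : 0 < ε) (hε' : ε < 1/5) (hμ : 0 ≤ μ)
    (herr_nonneg : ∀ g, 0 ≤ err g)
    (hdist_nonneg : ∀ g g', 0 ≤ dist g g')
    (hdist_symm : ∀ g g', dist g g' = dist g' g)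
    (hdist_triangle : ∀ g₁ g₂ g₃, dist g₁ g₃ ≤ dist g₁ g₂ + dist g₂ g₃)
    (hdist_err : ∀ g g', dist g g' ≤ err g + err g')
    (hsrra : ∀ h', |f h' - (err h' - err h)| ≤ ε * (dist h h' + μ))
    (hmin : ∀ h', f h₁ ≤ f h')
    (hν : err hstar = ν) (hopt : ∀ g, ν ≤ err g) :
    err h₁ ≤ ((1 + 3*ε) * ν + 2*ε * err h + 2*ε*μ) / (1 - ε) := by
  have A := abs_le.mp (hsrra h₁)
  have B := abs_le.mp (hsrra hstar)
  have M := hmin hstar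
  have D1 := hdist_err h h₁
  have D2 := hdist_err h hstar
  have hν0 : 0 ≤ ν := hν ▸ herr_nonneg hstar
  rw [le_div_iff₀ (by linarith)]
  nlinarith [A.1, A.2, B.1, B.2, herr_nonneg h, herr_nonneg h₁]
end

section
/- Fix permutations π of {1,…,n}, 0 < ε < 1, an even integer M, and an integer d. For a permutation σ let T̄_{σ,M} be the set of elements u with |π(u) - σ(u)| > εM. Then the number of distinct restrictions of the profile vector (σ(u) - π(u))_{u ∈ V} to T̄_{σ,M}, as σ ranges over all permutations with Spearman footrule distance Σᵤ|σ(u)-π(u)| = d, is at most n^{2d/(εM)}. -/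
open Finset

lemma card_small_support_le {n : ℕ} (hn : 1 ≤ n) (π : Equiv.Perm (Fin n)) (J : ℕ)
    (S : Set (Fin n → ℤ))
    (hS : ∀ g ∈ S, ∃ σ : Equiv.Perm (Fin n),
      (univ.filter (fun u => g u ≠ 0)).card ≤ J ∧
      ∀ u, g u ≠ 0 → g u = (σ u : ℤ) - (π u : ℤ)) :
    Nat.card S ≤ (n * n) ^ J := by
  classical
  let u₀ : Fin n := ⟨0, hn⟩
  let enc : S → (Fin J → Fin n × Fin n) := fun p i =>
    if h : (i : ℕ) < ((univ.filter (fun u => p.1 u ≠ 0)).sort (· ≤ ·)).length then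
      (((univ.filter (fun u => p.1 u ≠ 0)).sort (· ≤ ·)).get ⟨i, h⟩,
        (hS p.1 p.2).choose (((univ.filter (fun u => p.1 u ≠ 0)).sort (· ≤ ·)).get ⟨i, h⟩))
    else (u₀, π u₀)
  let rec' : (Fin J → Fin n × Fin n) → (Fin n → ℤ) := fun f u =>
    if h : ∃ i, (f i).1 = u ∧ (f i).2 ≠ π u then ((f h.choose).2 : ℤ) - (π u : ℤ) else 0
  have hinv : ∀ p : S, rec' (enc p) = p.1 := by
    rintro ⟨g, hg⟩
    funext u
    obtain ⟨hcard, hval⟩ := (hS g hg).choose_spec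
    have hmemL : ∀ a, a ∈ ((univ.filter (fun u => g u ≠ 0)).sort (· ≤ ·)) ↔ g a ≠ 0 := by
      intro a
      rw [Finset.mem_sort, Finset.mem_filter]
      simp
    have hLlen : ((univ.filter (fun u => g u ≠ 0)).sort (· ≤ ·)).length ≤ J := by
      rw [Finset.length_sort]; exact hcard
    by_cases hgu : g u = 0
    · have hne : ¬ ∃ i, ((enc ⟨g, hg⟩) i).1 = u ∧ ((enc ⟨g, hg⟩) i).2 ≠ π u := by
        rintro ⟨i, h1, h2⟩
        simp only [enc] at h1 h2
        by_cases h : (i : ℕ) < ((univ.filter (fun u => g u ≠ 0)).sort (· ≤ ·)).length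
        · rw [dif_pos h] at h1 h2
          have hm : ((univ.filter (fun u => g u ≠ 0)).sort (· ≤ ·)).get ⟨i, h⟩
              ∈ ((univ.filter (fun u => g u ≠ 0)).sort (· ≤ ·)) := List.get_mem _ _
          rw [hmemL] at hm
          simp only at h1
          rw [h1] at hm
          exact hm hgu
        · rw [dif_neg h] at h1 h2
          simp only at h1 h2
          rw [← h1] at h2
          exact h2 rfl
      simp only [rec', dif_neg hne]
      exact hgu.symm
    · have huL : u ∈ ((univ.filter (fun u => g u ≠ 0)).sort (· ≤ ·)) := (hmemL u).2 hgu
      obtain ⟨k, hk⟩ := List.get_of_mem huL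
      have hσπ : (hS g hg).choose u ≠ π u := by
        intro hEq
        apply hgu
        rw [hval u hgu, hEq, sub_self]
      have hex : ∃ i, ((enc ⟨g, hg⟩) i).1 = u ∧ ((enc ⟨g, hg⟩) i).2 ≠ π u := by
        refine ⟨⟨(k : ℕ), lt_of_lt_of_le k.2 hLlen⟩, ?_⟩
        simp only [enc, dif_pos k.2]
        exact ⟨hk, by rw [hk]; exact hσπ⟩
      simp only [rec', dif_pos hex]
      obtain ⟨h1, h2⟩ := hex.choose_spec
      simp only [enc] at h1 h2 ⊢
      by_cases h : ((hex.choose : Fin J) : ℕ)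
          < ((univ.filter (fun u => g u ≠ 0)).sort (· ≤ ·)).length
      · rw [dif_pos h] at h1 h2 ⊢
        simp only at h1 h2 ⊢
        have hgL : g (((univ.filter (fun u => g u ≠ 0)).sort (· ≤ ·)).get
            ⟨(hex.choose : Fin J), h⟩) ≠ 0 := (hmemL _).1 (List.get_mem _ _)
        rw [h1] at hgL
        rw [h1]
        exact (hval u hgL).symm
      · rw [dif_neg h] at h1 h2
        simp only at h1 h2
        rw [← h1] at h2
        exact absurd rfl h2
  have hinj : Function.Injective enc := by
    intro p q hpq
    have h : p.1 = q.1 := by rw [← hinv p, ← hinv q, hpq]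
    exact Subtype.ext h
  have h1 : Nat.card S ≤ Nat.card (Fin J → Fin n × Fin n) :=
    Nat.card_le_card_of_injective enc hinj
  have h2 : Nat.card (Fin J → Fin n × Fin n) = (n * n) ^ J := by
    simp [Nat.card_eq_fintype_card]
  omega

/-- Counting restricted profiles: the number of distinct restrictions of the
profile vector `(σ(u) - π(u))ᵤ` to the set `T̄_{σ,M}` of elements that moved
more than `εM`, over permutations `σ` at Spearman footrule distance exactly
`d` from `π`, is at most `n^{2d/(εM)}`. -/
theorem profile_counting (n : ℕ) (hn : 1 ≤ n) (π : Equiv.Perm (Fin n))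
    (ε : ℝ) (hε : 0 < ε) (hε' : ε < 1) (M : ℕ) (hM : Even M) (hMpos : 0 < M)
    (d : ℕ) :
    (Nat.card {g : Fin n → ℤ | ∃ σ : Equiv.Perm (Fin n),
        (∑ u : Fin n, ((σ u : ℤ) - (π u : ℤ)).natAbs) = d ∧
        g = fun u => if ε * M < |((σ u : ℤ) - (π u : ℤ) : ℤ)| then
          ((σ u : ℤ) - (π u : ℤ)) else 0} : ℝ)
      ≤ (n : ℝ) ^ ((2 * (d : ℝ)) / (ε * M)) := by
  classical
  have hMR : (0:ℝ) < (M:ℝ) := by exact_mod_cast hMpos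
  have htpos : (0:ℝ) < ε * M := mul_pos hε hMR
  set J : ℕ := ⌊(d : ℝ) / (ε * M)⌋₊ with hJ
  have key : Nat.card {g : Fin n → ℤ | ∃ σ : Equiv.Perm (Fin n),
        (∑ u : Fin n, ((σ u : ℤ) - (π u : ℤ)).natAbs) = d ∧
        g = fun u => if ε * M < |((σ u : ℤ) - (π u : ℤ) : ℤ)| then
          ((σ u : ℤ) - (π u : ℤ)) else 0} ≤ (n * n) ^ J := by
    apply card_small_support_le hn π J
    rintro g ⟨σ, hsum, hgdef⟩
    have hcond : ∀ u, g u ≠ 0 →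
        (ε * M < |((σ u : ℤ) - (π u : ℤ) : ℤ)| ∧ g u = (σ u : ℤ) - (π u : ℤ)) := by
      intro u hu
      rw [hgdef] at hu
      simp only at hu
      by_cases hc : ε * M < |((σ u : ℤ) - (π u : ℤ) : ℤ)|
      · refine ⟨hc, ?_⟩
        simp only [hgdef]
        rw [if_pos hc]
      · rw [if_neg hc] at hu; exact absurd rfl hu
    refine ⟨σ, ?_, fun u hu => (hcond u hu).2⟩
    apply Nat.le_floor
    rw [le_div_iff₀ htpos]
    have hstep : ∀ u ∈ univ.filter (fun u => g u ≠ 0),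
        ε * M ≤ ((((σ u : ℤ) - (π u : ℤ)).natAbs : ℕ) : ℝ) := by
      intro u hu
      rw [Finset.mem_filter] at hu
      have h := (hcond u hu.2).1
      have habs : ((|((σ u : ℤ) - (π u : ℤ))| : ℤ) : ℝ)
          = ((((σ u : ℤ) - (π u : ℤ)).natAbs : ℕ) : ℝ) := by
        rw [Int.cast_abs, Nat.cast_natAbs]
        push_cast
        ring
      rw [habs] at h
      exact le_of_lt h
    calc ((univ.filter (fun u => g u ≠ 0)).card : ℝ) * (ε * M)
        = ∑ _u ∈ univ.filter (fun u => g u ≠ 0), ε * M := by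
          rw [Finset.sum_const, nsmul_eq_mul]
      _ ≤ ∑ u ∈ univ.filter (fun u => g u ≠ 0),
            ((((σ u : ℤ) - (π u : ℤ)).natAbs : ℕ) : ℝ) := Finset.sum_le_sum hstep
      _ ≤ ∑ u : Fin n, ((((σ u : ℤ) - (π u : ℤ)).natAbs : ℕ) : ℝ) :=
          Finset.sum_le_sum_of_subset_of_nonneg (Finset.subset_univ _)
            (fun _ _ _ => by positivity)
      _ = (d : ℝ) := by
          rw [← hsum]
          push_cast
          ring
  have hcast : (Nat.card {g : Fin n → ℤ | ∃ σ : Equiv.Perm (Fin n),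
        (∑ u : Fin n, ((σ u : ℤ) - (π u : ℤ)).natAbs) = d ∧
        g = fun u => if ε * M < |((σ u : ℤ) - (π u : ℤ) : ℤ)| then
          ((σ u : ℤ) - (π u : ℤ)) else 0} : ℝ) ≤ (((n * n) ^ J : ℕ) : ℝ) := by
    exact_mod_cast key
  refine hcast.trans ?_
  have h1 : (((n * n) ^ J : ℕ) : ℝ) = (n : ℝ) ^ ((2 * J : ℕ) : ℝ) := by
    rw [Real.rpow_natCast]
    push_cast
    ring
  rw [h1]
  apply Real.rpow_le_rpow_of_exponent_le
  · exact_mod_cast hn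
  · have hfl : (J : ℝ) ≤ (d : ℝ) / (ε * M) :=
      Nat.floor_le (by positivity)
    have : ((2 * J : ℕ) : ℝ) = 2 * (J : ℝ) := by push_cast; ring
    rw [this]
    calc 2 * (J : ℝ) ≤ 2 * ((d : ℝ) / (ε * M)) := by linarith
      _ = 2 * (d : ℝ) / (ε * M) := by ring
end

section
/- The VC dimension of the class of all permutations of an n-element set V, viewed as binary classifiers on the domain of ordered distinct pairs X = {(u,v) : u ≠ v} via π(u,v) = 1 iff u precedes v in π, is exactly n - 1. -/
open Finset

/-- A finite set `S` of ordered pairs is shattered by the class of permutations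
(viewed as binary classifiers `(u,v) ↦ 1[u ≺_π v]`, encoded via positions:
`(u,v) ↦ 1[π u < π v]`). -/
def PermShatters (n : ℕ) (S : Finset (Fin n × Fin n)) : Prop :=
  ∀ T ⊆ S, ∃ π : Equiv.Perm (Fin n), ∀ p ∈ S, (p ∈ T ↔ π p.1 < π p.2)

section aux

/-- Rank lemma: any injective `f : Fin n → ℕ` is realized order-wise by a permutation. -/
lemma exists_perm_of_inj {n : ℕ} (f : Fin n → ℕ) (hf : Function.Injective f) :
    ∃ π : Equiv.Perm (Fin n), ∀ i j, π i < π j ↔ f i < f j := by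
  classical
  set s : Finset ℕ := Finset.univ.image f with hs_def
  have hs : s.card = n := by
    rw [hs_def, Finset.card_image_of_injective _ hf, Finset.card_univ, Fintype.card_fin]
  let e := s.orderIsoOfFin hs
  have hmem : ∀ i, f i ∈ s := fun i => Finset.mem_image_of_mem f (Finset.mem_univ i)
  let g : Fin n → Fin n := fun i => e.symm ⟨f i, hmem i⟩
  have hg : Function.Injective g := by
    intro i j h
    apply hf
    have := congrArg e h
    simpa [g] using congrArg Subtype.val this
  refine ⟨Equiv.ofBijective g (Finite.injective_iff_bijective.mp hg), fun i j => ?_⟩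
  show g i < g j ↔ f i < f j
  rw [show (g i < g j ↔ _) from e.symm.lt_iff_lt]
  exact Iff.rfl

lemma walk_le {V : Type*} {G : SimpleGraph V} {α : Type*} [Preorder α] (f : V → α) :
    ∀ {a b : V} (w : G.Walk a b), (∀ d ∈ w.darts, f d.fst < f d.snd) → f a ≤ f b := by
  intro a b w
  induction w with
  | nil => intro _; exact le_refl _
  | cons h p ih =>
    intro hd
    rw [SimpleGraph.Walk.darts_cons] at hd
    have h1 := hd _ List.mem_cons_self
    have h2 := ih fun d hdm => hd d (List.mem_cons_of_mem _ hdm)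
    exact le_of_lt (lt_of_lt_of_le h1 h2)

lemma walk_lt {V : Type*} {G : SimpleGraph V} {α : Type*} [Preorder α] (f : V → α)
    {a b : V} (w : G.Walk a b) (hw : ∀ d ∈ w.darts, f d.fst < f d.snd) (hnil : ¬ w.Nil) :
    f a < f b := by
  cases w with
  | nil => exact absurd SimpleGraph.Walk.nil_nil hnil
  | cons h p =>
    rw [SimpleGraph.Walk.darts_cons] at hw
    exact lt_of_lt_of_le (hw _ List.mem_cons_self)
      (walk_le f p fun d hd => hw d (List.mem_cons_of_mem _ hd))

/-- Upper bound: a shattered set of distinct pairs has at most `n - 1` elements. -/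
lemma perm_shatters_card_le {n : ℕ} (hn : 1 ≤ n) (S : Finset (Fin n × Fin n))
    (hd : ∀ p ∈ S, p.1 ≠ p.2) (hsh : PermShatters n S) : S.card ≤ n - 1 := by
  classical
  -- no pair appears in both orientations
  have hdouble : ∀ u v : Fin n, (u, v) ∈ S → (v, u) ∈ S → False := by
    intro u v huv hvu
    have hT : ({(u, v), (v, u)} : Finset (Fin n × Fin n)) ⊆ S := by
      intro p hp
      rcases Finset.mem_insert.mp hp with h | h
      · exact h ▸ huv
      · exact (Finset.mem_singleton.mp h) ▸ hvu
    obtain ⟨π, hπ⟩ := hsh _ hT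
    have h1 : π u < π v := (hπ (u, v) huv).mp (by simp)
    have h2 : π v < π u := (hπ (v, u) hvu).mp (by simp)
    exact lt_asymm h1 h2
  -- the underlying simple graph
  set G : SimpleGraph (Fin n) := SimpleGraph.fromRel (fun a b => (a, b) ∈ S) with hG_def
  have hGadj : ∀ p ∈ S, G.Adj p.1 p.2 := by
    intro p hp
    rw [hG_def, SimpleGraph.fromRel_adj]
    exact ⟨hd p hp, Or.inl (by simpa using hp)⟩
  -- the graph is acyclic
  have hac : G.IsAcyclic := by
    intro v c hc
    set T : Finset (Fin n × Fin n) :=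
      S.filter (fun p => p ∈ c.darts.map SimpleGraph.Dart.toProd) with hT_def
    obtain ⟨π, hπ⟩ := hsh T (Finset.filter_subset _ _)
    have key : ∀ d ∈ c.darts, π d.fst < π d.snd := by
      intro d hdm
      have hadj : d.toProd.1 ≠ d.toProd.2 ∧
          ((d.toProd.1, d.toProd.2) ∈ S ∨ (d.toProd.2, d.toProd.1) ∈ S) :=
        (SimpleGraph.fromRel_adj _ _ _).mp d.adj
      rcases hadj.2 with hS | hS
      · have hmemT : (d.fst, d.snd) ∈ T := by
          rw [hT_def, Finset.mem_filter]
          refine ⟨by simpa using hS, List.mem_map.mpr ⟨d, hdm, rfl⟩⟩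
        exact (hπ _ (by simpa using hS)).mp hmemT
      · have hnT : (d.snd, d.fst) ∉ T := by
          intro hmem
          rw [hT_def, Finset.mem_filter] at hmem
          obtain ⟨d', hd', hdp⟩ := List.mem_map.mp hmem.2
          have hnd : (c.darts.map SimpleGraph.Dart.edge).Nodup := hc.edges_nodup
          have hedge : d'.edge = d.edge := by
            show s(d'.toProd.1, d'.toProd.2) = s(d.toProd.1, d.toProd.2)
            rw [hdp]
            exact Sym2.eq_swap
          have hdd : d' = d := List.inj_on_of_nodup_map hnd hd' hdm hedge
          rw [hdd] at hdp
          exact d.fst_ne_snd (congrArg Prod.fst hdp)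
        have h2 : ¬ π d.snd < π d.fst := fun hlt => hnT ((hπ _ (by simpa using hS)).mpr hlt)
        exact lt_of_le_of_ne (not_lt.mp h2) (π.injective.ne d.fst_ne_snd)
    exact absurd (walk_lt (⇑π) c key hc.not_nil) (lt_irrefl _)
  -- roots and distances
  set root : Fin n → Fin n := fun v => (G.connectedComponentMk v).out with hroot_def
  have hmk_root : ∀ v, G.connectedComponentMk (root v) = G.connectedComponentMk v :=
    fun v => Quot.out_eq _
  have hreach : ∀ v, G.Reachable (root v) v :=
    fun v => SimpleGraph.ConnectedComponent.exact (hmk_root v)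
  have hroot_adj : ∀ {u w : Fin n}, G.Adj u w → root u = root w := by
    intro u w h
    exact congrArg Quot.out (SimpleGraph.ConnectedComponent.sound h.reachable)
  have hroot_idem : ∀ v, root (root v) = root v := fun v => congrArg Quot.out (hmk_root v)
  set dd : Fin n → ℕ := fun v => G.dist (root v) v with hdd_def
  -- a vertex has at most one neighbor closer to the root
  have key2 : ∀ {u u' w : Fin n}, G.Adj u w → dd u < dd w → G.Adj u' w → dd u' < dd w →
      u = u' := by
    intro u u' w h h1 h' h1'
    have build : ∀ (x : Fin n) (hx : G.Adj x w), dd x < dd w →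
        ∃ q : G.Walk w (root w), q.IsPath ∧ q.getVert 1 = x := by
      intro x hx hlt
      have hrx : root x = root w := hroot_adj hx
      obtain ⟨p0, hp0, hpl0⟩ := (hreach x).exists_path_of_dist
      set p : G.Walk (root w) x := p0.copy hrx rfl with hp_def
      have hp : p.IsPath := by rw [hp_def, SimpleGraph.Walk.isPath_copy]; exact hp0
      have hpl : p.length = G.dist (root x) x := by
        rw [hp_def, SimpleGraph.Walk.length_copy]; exact hpl0
      have hws : w ∉ p.support := by
        intro hws
        have hle := SimpleGraph.Walk.length_takeUntil_le p hws
        have hdle := SimpleGraph.dist_le (p.takeUntil w hws)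
        have : dd w ≤ dd x := by
          calc dd w = G.dist (root w) w := rfl
          _ ≤ (p.takeUntil w hws).length := hdle
          _ ≤ p.length := hle
          _ = G.dist (root x) x := hpl
          _ = dd x := rfl
        omega
      refine ⟨SimpleGraph.Walk.cons hx.symm p.reverse, ?_, ?_⟩
      · refine hp.reverse.cons ?_
        rw [SimpleGraph.Walk.support_reverse, List.mem_reverse]
        exact hws
      · rw [SimpleGraph.Walk.getVert_cons_succ, SimpleGraph.Walk.getVert_zero]
    obtain ⟨q, hq, hq1⟩ := build u h h1
    obtain ⟨q', hq', hq1'⟩ := build u' h' h1'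
    have : q = q' := by
      have := hac.path_unique ⟨q, hq⟩ ⟨q', hq'⟩
      exact congrArg Subtype.val this
    rw [← hq1, ← hq1', this]
  -- adjacent vertices have different distances to the root
  have key3 : ∀ {u w : Fin n}, G.Adj u w → dd u ≠ dd w := by
    intro u w h heq
    have hrx : root u = root w := hroot_adj h
    obtain ⟨p0, hp0, hpl0⟩ := (hreach u).exists_path_of_dist
    set p : G.Walk (root w) u := p0.copy hrx rfl with hp_def
    have hp : p.IsPath := by rw [hp_def, SimpleGraph.Walk.isPath_copy]; exact hp0
    have hpl : p.length = G.dist (root u) u := by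
      rw [hp_def, SimpleGraph.Walk.length_copy]; exact hpl0
    have hws : w ∉ p.support := by
      intro hws
      have hle := SimpleGraph.Walk.length_takeUntil_le p hws
      have hdle := SimpleGraph.dist_le (p.takeUntil w hws)
      -- then the remainder has length 0, so u = w, contradicting adjacency
      have hspec := SimpleGraph.Walk.take_spec p hws
      have hlen : (p.takeUntil w hws).length + (p.dropUntil w hws).length = p.length := by
        rw [← SimpleGraph.Walk.length_append, hspec]
      have hddw : dd w = G.dist (root w) w := rfl
      have hddu : dd u = G.dist (root u) u := rfl
      have hdrop : (p.dropUntil w hws).length = 0 := by omega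
      exact h.ne (SimpleGraph.Walk.eq_of_length_eq_zero hdrop).symm
    obtain ⟨p', hp', hpl'⟩ := (hreach w).exists_path_of_dist
    have hq : (SimpleGraph.Walk.cons h.symm p.reverse).IsPath := by
      refine hp.reverse.cons ?_
      rw [SimpleGraph.Walk.support_reverse, List.mem_reverse]
      exact hws
    have hqq : (SimpleGraph.Walk.cons h.symm p.reverse) = p'.reverse := by
      have := hac.path_unique ⟨_, hq⟩ ⟨p'.reverse, hp'.reverse⟩
      exact congrArg Subtype.val this
    have hlen := congrArg SimpleGraph.Walk.length hqq
    rw [SimpleGraph.Walk.length_cons, SimpleGraph.Walk.length_reverse,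
      SimpleGraph.Walk.length_reverse, hpl, hpl'] at hlen
    have h1 : dd u = G.dist (root u) u := rfl
    have h2 : dd w = G.dist (root w) w := rfl
    omega
  -- the "far endpoint" map
  set f : Fin n × Fin n → Fin n := fun p => if dd p.1 < dd p.2 then p.2 else p.1 with hf_def
  have hfar : ∀ p ∈ S, ∃ o : Fin n, G.Adj o (f p) ∧ dd o < dd (f p) ∧
      (p = (o, f p) ∨ p = (f p, o)) := by
    intro p hp
    have hadj := hGadj p hp
    have hne := key3 hadj
    by_cases hlt : dd p.1 < dd p.2
    · have hfp : f p = p.2 := by rw [hf_def]; simp [hlt]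
      exact ⟨p.1, hfp ▸ hadj, hfp ▸ hlt, Or.inl (by rw [hfp])⟩
    · have hlt2 : dd p.2 < dd p.1 := by omega
      have hfp : f p = p.1 := by rw [hf_def]; simp [hlt]
      exact ⟨p.2, hfp ▸ hadj.symm, hfp ▸ hlt2, Or.inr (by rw [hfp])⟩
  set r0 : Fin n := root ⟨0, hn⟩ with hr0_def
  have hmaps : ∀ p ∈ S, f p ∈ Finset.univ.erase r0 := by
    intro p hp
    obtain ⟨o, hadj, hlt, _⟩ := hfar p hp
    refine Finset.mem_erase.mpr ⟨?_, Finset.mem_univ _⟩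
    intro hfeq
    have hpos : 0 < dd (f p) := Nat.lt_of_le_of_lt (Nat.zero_le _) hlt
    have : root (f p) ≠ f p := by
      intro hroot
      have : dd (f p) = G.dist (root (f p)) (f p) := rfl
      rw [this, hroot, SimpleGraph.dist_self] at hpos
      omega
    apply this
    rw [hfeq, hr0_def, hroot_idem]
  have hinj : Set.InjOn f S := by
    intro p hp q hq hfeq
    obtain ⟨o, hadj, hlt, hcase⟩ := hfar p hp
    obtain ⟨o', hadj', hlt', hcase'⟩ := hfar q hq
    rw [← hfeq] at hadj' hlt' hcase'
    have ho : o = o' := key2 hadj hlt hadj' hlt'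
    rw [← ho] at hcase'
    rcases hcase with h1 | h1 <;> rcases hcase' with h2 | h2
    · rw [h1, h2]
    · exfalso
      exact hdouble o (f p) (h1 ▸ hp) (h2 ▸ hq)
    · exfalso
      exact hdouble o (f p) (h2 ▸ hq) (h1 ▸ hp)
    · rw [h1, h2]
  calc S.card ≤ (Finset.univ.erase r0).card := Finset.card_le_card_of_injOn f hmaps hinj
  _ = n - 1 := by rw [Finset.card_erase_of_mem (Finset.mem_univ _), Finset.card_univ,
      Fintype.card_fin]

end aux

/-- The VC dimension of the class of permutations of an `n`-element set, viewed
as binary classifiers on ordered distinct pairs, is exactly `n - 1`: some set of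
`n - 1` ordered distinct pairs is shattered, and every shattered set of ordered
distinct pairs has cardinality at most `n - 1`. -/
theorem vcDim_permutations (n : ℕ) (hn : 1 ≤ n) :
    (∃ S : Finset (Fin n × Fin n), S.card = n - 1 ∧ (∀ p ∈ S, p.1 ≠ p.2) ∧
      PermShatters n S) ∧
    (∀ S : Finset (Fin n × Fin n), (∀ p ∈ S, p.1 ≠ p.2) → PermShatters n S →
      S.card ≤ n - 1) := by
  constructor
  · classical
    set z : Fin n := ⟨0, hn⟩ with hz_def
    set S : Finset (Fin n × Fin n) := (Finset.univ.erase z).image (fun i => (z, i)) with hS_def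
    have hmemS : ∀ p, p ∈ S ↔ p.1 = z ∧ p.2 ≠ z := by
      intro p
      rw [hS_def]
      constructor
      · intro hp
        obtain ⟨i, hi, hpi⟩ := Finset.mem_image.mp hp
        rw [← hpi]
        exact ⟨rfl, (Finset.mem_erase.mp hi).1⟩
      · intro ⟨h1, h2⟩
        refine Finset.mem_image.mpr ⟨p.2, Finset.mem_erase.mpr ⟨h2, Finset.mem_univ _⟩, ?_⟩
        rw [← h1]
    refine ⟨S, ?_, ?_, ?_⟩
    · rw [hS_def, Finset.card_image_of_injective _ (fun a b h => congrArg Prod.snd h),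
        Finset.card_erase_of_mem (Finset.mem_univ _), Finset.card_univ, Fintype.card_fin]
    · intro p hp
      obtain ⟨h1, h2⟩ := (hmemS p).mp hp
      rw [h1]
      exact fun h => h2 h.symm
    · intro T hT
      set g : Fin n → ℕ := fun i => if i = z then n else if (z, i) ∈ T then 2 * n + i.val
        else i.val with hg_def
      have hginj : Function.Injective g := by
        intro i j hij
        rw [hg_def] at hij
        have hi := i.isLt
        have hj := j.isLt
        by_cases h1 : i = z <;> by_cases h2 : j = z <;>
          simp only [h1, h2, if_true, if_false, if_pos, if_neg] at hij
        · rw [h1, h2]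
        · split_ifs at hij <;> omega
        · split_ifs at hij <;> omega
        · split_ifs at hij with ha hb hb
          · exact Fin.ext (by omega)
          · omega
          · omega
          · exact Fin.ext (by omega)
      obtain ⟨π, hπ⟩ := exists_perm_of_inj g hginj
      refine ⟨π, fun p hp => ?_⟩
      obtain ⟨h1, h2⟩ := (hmemS p).mp hp
      have hpz : p = (z, p.2) := by rw [← h1]
      have hgz : g z = n := by rw [hg_def]; simp
      have hg2 : g p.2 = if (z, p.2) ∈ T then 2 * n + p.2.val else p.2.val := by
        rw [hg_def]; simp [h2]
      rw [hπ p.1 p.2, h1, hgz, hg2]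
      constructor
      · intro hmem
        have hTm : (z, p.2) ∈ T := hpz ▸ hmem
        rw [if_pos hTm]
        omega
      · intro hlt
        by_cases hmem : (z, p.2) ∈ T
        · rw [hpz]; exact hmem
        · rw [if_neg hmem] at hlt
          have := p.2.isLt
          omega
  · intro S hd hsh
    exact perm_shatters_card_le hn S hd hsh
end

section
/- Let k ≥ 2 and n ≥ 2k. For the class C of partitions of an n-element set into at most k parts (as binary classifiers on distinct pairs under the uniform distribution), the uniform disagreement coefficient is Θ(n): for every h ∈ C there is a radius r = O(1/n) such that the disagreement region of the ball B(h, r) is the entire pair space X, hence Pr[dis(B(h,r))]/r = Ω(n). -/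
open Finset

/-- Normalized disagreement distance between two cluster assignments, over the
uniform measure on the `N = n(n-1)` ordered distinct pairs. -/
noncomputable def clusterDist (n k : ℕ) (c c' : Fin n → Fin k) : ℝ :=
  ((Finset.univ.filter (fun p : Fin n × Fin n =>
      p.1 ≠ p.2 ∧ ¬((c p.1 = c p.2) ↔ (c' p.1 = c' p.2)))).card : ℝ)
    / ((n : ℝ) * ((n : ℝ) - 1))

lemma clusterDist_self (n k : ℕ) (c : Fin n → Fin k) : clusterDist n k c c = 0 := by
  unfold clusterDist
  have : (Finset.univ.filter (fun p : Fin n × Fin n =>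
      p.1 ≠ p.2 ∧ ¬((c p.1 = c p.2) ↔ (c p.1 = c p.2)))) = ∅ := by
    apply Finset.filter_false_of_mem
    intro p _
    tauto
  rw [this]
  simp

lemma clusterDist_update (n k : ℕ) (hn : 2 ≤ n) (c : Fin n → Fin k) (u : Fin n) (a : Fin k) :
    clusterDist n k c (Function.update c u a) ≤ 4 / n := by
  unfold clusterDist
  set S := (Finset.univ.filter (fun p : Fin n × Fin n =>
      p.1 ≠ p.2 ∧ ¬((c p.1 = c p.2) ↔ (Function.update c u a p.1 = Function.update c u a p.2))))
  have hsub : S ⊆ ({u} ×ˢ Finset.univ) ∪ (Finset.univ ×ˢ {u}) := by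
    intro p hp
    simp only [S, Finset.mem_filter] at hp
    by_contra hmem
    simp only [Finset.mem_union, Finset.mem_product, Finset.mem_singleton, Finset.mem_univ,
      true_and, and_true, not_or] at hmem
    rw [Function.update_of_ne hmem.1, Function.update_of_ne hmem.2] at hp
    tauto
  have hcard : (S.card : ℝ) ≤ 2 * n := by
    have h1 := Finset.card_le_card hsub
    have h2 : (({u} ×ˢ (Finset.univ : Finset (Fin n))) ∪
        ((Finset.univ : Finset (Fin n)) ×ˢ {u})).card ≤ n + n := by
      refine le_trans (Finset.card_union_le _ _) ?_
      simp
    have : S.card ≤ 2 * n := by omega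
    exact_mod_cast this
  have hnR : (2 : ℝ) ≤ n := by exact_mod_cast hn
  have hpos : (0 : ℝ) < (n : ℝ) * ((n : ℝ) - 1) := by nlinarith
  rw [div_le_div_iff₀ hpos (by nlinarith : (0:ℝ) < (n:ℝ))]
  nlinarith

/-- The uniform disagreement coefficient of `k`-clusterings is `Θ(n)`: for
every cluster assignment `c` there is a radius `r = O(1/n)` (indeed `r·n ≤ 4`)
such that the disagreement region of the ball `B(c, r)` is the whole pair
space: every ordered distinct pair is disagreed upon by two assignments within
distance `r` of `c`.  Consequently `Pr[dis(B(c,r))]/r = 1/r ≥ n/4 = Ω(n)`. -/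
theorem cluster_disagreement_coefficient (n k : ℕ) (hk : 2 ≤ k) (hn : 2 * k ≤ n)
    (c : Fin n → Fin k) :
    ∃ r : ℝ, 0 < r ∧ r * n ≤ 4 ∧
      (∀ u v : Fin n, u ≠ v →
        ∃ c₁ c₂ : Fin n → Fin k, clusterDist n k c c₁ ≤ r ∧
          clusterDist n k c c₂ ≤ r ∧ ¬((c₁ u = c₁ v) ↔ (c₂ u = c₂ v))) ∧
      (n : ℝ) / 4 ≤ 1 / r := by
  have hn4 : 4 ≤ n := by omega
  have hnR : (4 : ℝ) ≤ n := by exact_mod_cast hn4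
  have hnpos : (0 : ℝ) < n := by linarith
  refine ⟨4 / n, by positivity, ?_, ?_, ?_⟩
  · rw [div_mul_cancel₀ _ (ne_of_gt hnpos)]
  · intro u v huv
    haveI : Nontrivial (Fin k) := Fin.nontrivial_iff_two_le.mpr hk
    by_cases hcv : c u = c v
    · obtain ⟨a, ha⟩ := exists_ne (c v)
      refine ⟨c, Function.update c u a, ?_, ?_, ?_⟩
      · rw [clusterDist_self]; positivity
      · exact clusterDist_update n k (by omega) c u a
      · rw [Function.update_self, Function.update_of_ne (Ne.symm huv)]
        simp [hcv, ha]
    · refine ⟨c, Function.update c u (c v), ?_, ?_, ?_⟩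
      · rw [clusterDist_self]; positivity
      · exact clusterDist_update n k (by omega) c u (c v)
      · rw [Function.update_self, Function.update_of_ne (Ne.symm huv)]
        simp [hcv]
  · rw [one_div_div]
end

section
/- For the class of permutations of an n-element set, viewed as binary classifiers on ordered distinct pairs under the uniform distribution, the uniform disagreement coefficient is Ω(n): for any permutation π, swapping the positions of any two elements u, v yields a permutation at Kendall distance at most O(1/n) from π, and every ordered pair lies in the disagreement region of the resulting ball, so Pr[dis(B(π, c/n))] = 1 for a suitable constant c. -/
open Finset

/-- The Kendall tau disagreement count between two permutations (ordered pairs). -/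
def kendallCard (n : ℕ) (π σ : Equiv.Perm (Fin n)) : ℕ :=
  (Finset.univ.filter (fun p : Fin n × Fin n =>
      p.1 ≠ p.2 ∧ ¬((π p.1 < π p.2) ↔ (σ p.1 < σ p.2)))).card

/-- The uniform disagreement coefficient of the class of permutations is
`Ω(n)`: for any permutation `π` and any ordered distinct pair `(u,v)` there is
a permutation `σ` (obtained by swapping two elements) at normalized Kendall
distance at most `4/n` from `π` that disagrees with `π` on `(u,v)`.  Hence
every ordered pair lies in the disagreement region of `B(π, 4/n)`, so
`Pr[dis(B(π, 4/n))] = 1`. -/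
theorem perm_disagreement_coefficient (n : ℕ) (hn : 2 ≤ n)
    (π : Equiv.Perm (Fin n)) (u v : Fin n) (huv : u ≠ v) :
    ∃ σ : Equiv.Perm (Fin n),
      (kendallCard n π σ : ℝ) / ((n : ℝ) * ((n : ℝ) - 1)) ≤ 4 / n ∧
      ¬((π u < π v) ↔ (σ u < σ v)) := by
  refine ⟨Equiv.swap (π u) (π v) * π, ?_, ?_⟩
  · -- bound the Kendall disagreement count
    set σ := Equiv.swap (π u) (π v) * π with hσ
    have hcard : kendallCard n π σ ≤ 4 * (n - 1) := by
      have hsub : (Finset.univ.filter (fun p : Fin n × Fin n =>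
          p.1 ≠ p.2 ∧ ¬((π p.1 < π p.2) ↔ (σ p.1 < σ p.2)))) ⊆
          ((Finset.univ.filter (· ≠ u)).image (fun b => (u, b))) ∪
          ((Finset.univ.filter (· ≠ v)).image (fun b => (v, b))) ∪
          ((Finset.univ.filter (· ≠ u)).image (fun a => (a, u))) ∪
          ((Finset.univ.filter (· ≠ v)).image (fun a => (a, v))) := by
        intro p hp
        simp only [Finset.mem_filter, Finset.mem_univ, true_and] at hp
        obtain ⟨hne, hdis⟩ := hp
        have key : p.1 = u ∨ p.1 = v ∨ p.2 = u ∨ p.2 = v := by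
          by_contra h
          push_neg at h
          obtain ⟨h1u, h1v, h2u, h2v⟩ := h
          apply hdis
          have e1 : σ p.1 = π p.1 := by
            simp [hσ, Equiv.swap_apply_of_ne_of_ne (π.injective.ne h1u)
              (π.injective.ne h1v)]
          have e2 : σ p.2 = π p.2 := by
            simp [hσ, Equiv.swap_apply_of_ne_of_ne (π.injective.ne h2u)
              (π.injective.ne h2v)]
          rw [e1, e2]
        simp only [Finset.mem_union, Finset.mem_image, Finset.mem_filter,
          Finset.mem_univ, true_and]
        rcases key with h | h | h | h
        · exact Or.inl (Or.inl (Or.inl ⟨p.2, by subst h; exact ⟨hne.symm, by simp⟩⟩))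
        · exact Or.inl (Or.inl (Or.inr ⟨p.2, by subst h; exact ⟨hne.symm, by simp⟩⟩))
        · exact Or.inl (Or.inr ⟨p.1, by subst h; exact ⟨hne, by simp⟩⟩)
        · exact Or.inr ⟨p.1, by subst h; exact ⟨hne, by simp⟩⟩
      have hc1 : ∀ (w : Fin n), (Finset.univ.filter (· ≠ w)).card = n - 1 := by
        intro w
        rw [Finset.filter_ne' Finset.univ w, Finset.card_erase_of_mem (Finset.mem_univ w)]
        simp
      have himg : ∀ (w : Fin n) (f : Fin n → Fin n × Fin n), Function.Injective f →
          ((Finset.univ.filter (· ≠ w)).image f).card = n - 1 := by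
        intro w f hf
        rw [Finset.card_image_of_injective _ hf, hc1]
      calc kendallCard n π σ ≤ _ := Finset.card_le_card hsub
        _ ≤ _ + _ := Finset.card_union_le _ _
        _ ≤ (_ + _) + _ := by
            gcongr
            exact Finset.card_union_le _ _
        _ ≤ ((_ + _) + _) + _ := by
            gcongr
            exact Finset.card_union_le _ _
        _ ≤ 4 * (n - 1) := by
            rw [himg u _ (fun a b h => by simpa using congrArg Prod.snd h),
              himg v _ (fun a b h => by simpa using congrArg Prod.snd h),
              himg u _ (fun a b h => by simpa using congrArg Prod.fst h),
              himg v _ (fun a b h => by simpa using congrArg Prod.fst h)]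
            omega
    have hn1 : (1:ℝ) ≤ (n:ℝ) - 1 := by
      have : (2:ℝ) ≤ n := by exact_mod_cast hn
      linarith
    have hnpos : (0:ℝ) < n := by positivity
    have hcR : (kendallCard n π σ : ℝ) ≤ 4 * ((n:ℝ) - 1) := by
      have := hcard
      have h4 : ((4 * (n - 1) : ℕ) : ℝ) = 4 * ((n:ℝ) - 1) := by
        push_cast [Nat.cast_sub (by omega : 1 ≤ n)]
        ring
      calc (kendallCard n π σ : ℝ) ≤ ((4 * (n - 1) : ℕ) : ℝ) := by exact_mod_cast this
        _ = _ := h4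
    rw [div_le_div_iff₀ (by nlinarith) hnpos]
    nlinarith
  · -- disagreement on (u, v)
    have hπ : π u ≠ π v := π.injective.ne huv
    simp only [Equiv.Perm.mul_apply, Equiv.swap_apply_left, Equiv.swap_apply_right]
    rcases lt_or_gt_of_ne hπ with h | h
    · simp [h, not_lt.mpr h.le]
    · simp [h, not_lt.mpr h.le]
end

section
/- Let C̃ be a convex set of real-valued functions with surrogate risk R̃ : C̃ → ℝ≥0, optimal value ν̃ = inf R̃, a rounding map φ : C̃ → C, and a pseudo-metric dist on C with dist(φ(g), φ(g')) ≤ c·(R̃(g) + R̃(g')) for all g, g' (for a constant c ≥ 1). Suppose f : C̃ → ℝ satisfies |f(h̃') - (R̃(h̃') - R̃(h̃))| ≤ ε·(dist(φ(h̃), φ(h̃')) + μ) for all h̃', with 0 < ε < 1/(5c). If h̃₁ minimizes f over C̃, then R̃(h̃₁) ≤ (1 + O(cε))·ν̃ + O(cε)·R̃(h̃) + O(ε μ), where the O-constants depend only on c. -/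
/-- Single-step SRRA theorem for convex relaxations: with surrogate risk `R̃`,
rounding `φ`, and `dist(φg, φg') ≤ c(R̃g + R̃g')`, if `f` is an `(ε,μ)`-SRRA
with respect to `h̃` (distance measured between rounded hypotheses) and `h̃₁`
minimizes `f`, then `R̃ h̃₁ ≤ ((1+3cε)ν̃ + 2cε·R̃ h̃ + 2εμ)/(1 - cε)`. -/
theorem srra_relaxation_step {Ct C : Type*} (R : Ct → ℝ) (φ : Ct → C)
    (dist : C → C → ℝ) (c ε μ ν : ℝ)
    (ht : Ct) (h₁ hstar : Ct) (f : Ct → ℝ)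
    (hc : 1 ≤ c) (hε : 0 < ε) (hε' : ε < 1 / (5 * c)) (hμ : 0 ≤ μ)
    (hR_nonneg : ∀ g, 0 ≤ R g)
    (hdist_nonneg : ∀ g g', 0 ≤ dist g g')
    (hdist_symm : ∀ g g', dist g g' = dist g' g)
    (hdist_triangle : ∀ g₁ g₂ g₃, dist g₁ g₃ ≤ dist g₁ g₂ + dist g₂ g₃)
    (hdist_R : ∀ g g', dist (φ g) (φ g') ≤ c * (R g + R g'))
    (hsrra : ∀ h', |f h' - (R h' - R ht)| ≤ ε * (dist (φ ht) (φ h') + μ))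
    (hmin : ∀ h', f h₁ ≤ f h')
    (hν : R hstar = ν) (hopt : ∀ g, ν ≤ R g) :
    R h₁ ≤ ((1 + 3 * c * ε) * ν + 2 * c * ε * R ht + 2 * ε * μ) / (1 - c * ε) := by
  have hcε : c * ε < 1 / 5 := by
    have : ε < 1 / (5 * c) := hε'
    have hc0 : (0:ℝ) < c := lt_of_lt_of_le one_pos hc
    calc c * ε < c * (1 / (5 * c)) := by exact (mul_lt_mul_iff_right₀ hc0).2 hε'
    _ = 1 / 5 := by field_simp
  have hpos : 0 < 1 - c * ε := by linarith
  have a1 := abs_le.1 (hsrra h₁)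
  have a2 := abs_le.1 (hsrra hstar)
  have hm := hmin hstar
  have d1 := hdist_R ht h₁
  have d2 := hdist_R ht hstar
  have hν0 : 0 ≤ ν := hν ▸ hR_nonneg hstar
  rw [le_div_iff₀ hpos]
  nlinarith [hR_nonneg h₁, hR_nonneg ht, hdist_nonneg (φ ht) (φ h₁), hdist_nonneg (φ ht) (φ hstar), mul_nonneg (mul_nonneg (le_of_lt hε) (le_trans zero_le_one hc)) hν0]
end
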